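/- arXiv:1902.04433 — 7 statements merged into one kernel-verified Lean document; each statement's English description precedes it below -/
import Mathlib

section
/- Let f: P^1 → P^1 be the restriction to an invariant line, written in an affine coordinate y as y ↦ Q(0,y)/R(0,y) with R(0,y) of exact degree d, and suppose f has d+1 simple fixed points y_1, ..., y_{d+1}, all in the affine chart, with multipliers λ_i = f'(y_i) ≠ 1. Then for any polynomial P(0,y) of degree at most d-1, setting μ_i = P(0,y_i)/R(0,y_i), one has sum_{i=1}^{d+1} (1 - μ_i)/(1 - λ_i) = 1. -/
open Polynomial Finset

/-- Key sum identity: for a polynomial `G` of degree `< n+1`, the top coefficient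
`G.coeff n` equals `∑ G(y i) * nodalWeight i` over `n+1` distinct nodes. -/
lemma coeff_eq_sum_nodalWeight (n : ℕ) (y : Fin (n + 1) → ℂ) (hy : Function.Injective y)
    (G : Polynomial ℂ) (hG : G.degree < ((n + 1 : ℕ) : WithBot ℕ)) :
    G.coeff n = ∑ i, G.eval (y i) * Lagrange.nodalWeight Finset.univ y i := by
  have hvs : Set.InjOn y (Finset.univ : Finset (Fin (n + 1))) := hy.injOn
  have hcard : (Finset.univ : Finset (Fin (n + 1))).card = n + 1 := by simp
  have hdeg : G.degree < ((Finset.univ : Finset (Fin (n + 1))).card : WithBot ℕ) := by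
    rwa [hcard]
  conv_lhs => rw [Lagrange.eq_interpolate hvs hdeg]
  rw [Lagrange.interpolate_apply, finset_sum_coeff]
  refine Finset.sum_congr rfl fun i _ => ?_
  rw [coeff_C_mul]
  congr 1
  have hnd : (Lagrange.basis Finset.univ y i).natDegree = n := by
    rw [Lagrange.natDegree_basis hvs (Finset.mem_univ i), hcard]
    omega
  have hlc : (Lagrange.basis Finset.univ y i).coeff n
      = (Lagrange.basis Finset.univ y i).leadingCoeff := by
    rw [Polynomial.leadingCoeff, hnd]
  rw [hlc, Lagrange.basis, Polynomial.leadingCoeff_prod, Lagrange.nodalWeight]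
  refine Finset.prod_congr rfl fun j _ => ?_
  rw [Lagrange.basisDivisor, Polynomial.leadingCoeff_mul, Polynomial.leadingCoeff_C,
    (monic_X_sub_C (y j)).leadingCoeff, mul_one]

/-- The relative fixed-point formula on an invariant line: if `y ↦ Q(y)/R(y)` (with
`deg R = d` exactly, `deg Q ≤ d`) has `d+1` distinct simple fixed points `y i` with
multipliers `λ i ≠ 1`, then for any polynomial `P` of degree at most `d-1`, setting
`μ i = P(y i)/R(y i)`, one has `∑ (1 - μ i)/(1 - λ i) = 1`. -/
theorem stmt_3 (d : ℕ) (hd : 1 ≤ d) (Q R P : Polynomial ℂ)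
    (hR : R.degree = (d : ℕ)) (hQ : Q.degree ≤ (d : ℕ)) (hP : P.degree < (d : ℕ))
    (y : Fin (d + 1) → ℂ) (hy : Function.Injective y)
    (hfix : ∀ i, Q.eval (y i) = y i * R.eval (y i))
    (hRne : ∀ i, R.eval (y i) ≠ 0)
    (lam : Fin (d + 1) → ℂ)
    (hlam : ∀ i, lam i * (R.eval (y i)) ^ 2 =
      (derivative Q).eval (y i) * R.eval (y i) - Q.eval (y i) * (derivative R).eval (y i))
    (hlam1 : ∀ i, lam i ≠ 1) :
    ∑ i, (1 - P.eval (y i) / R.eval (y i)) / (1 - lam i) = 1 := by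
  have hvs : Set.InjOn y (Finset.univ : Finset (Fin (d + 1))) := hy.injOn
  have hRne0 : R ≠ 0 := fun h => by simp [h] at hR
  -- the fixed-point polynomial F = Q - X * R
  set F : Polynomial ℂ := Q - X * R with hF
  have hXR : (X * R : Polynomial ℂ).degree = ((d + 1 : ℕ) : WithBot ℕ) := by
    rw [degree_mul, degree_X, hR]
    rw [show ((d + 1 : ℕ) : WithBot ℕ) = (1 : ℕ) + (d : ℕ) by push_cast; ring]
    norm_cast
  have hQlt : Q.degree < (X * R : Polynomial ℂ).degree := by
    rw [hXR]
    exact lt_of_le_of_lt hQ (by exact_mod_cast WithBot.coe_lt_coe.mpr (Nat.lt_succ_self d))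
  have hFdeg : F.degree = ((d + 1 : ℕ) : WithBot ℕ) := by
    rw [hF, degree_sub_eq_right_of_degree_lt hQlt, hXR]
  have hFnat : F.natDegree = d + 1 := natDegree_eq_of_degree_eq_some hFdeg
  -- leading coefficient of F
  have hQc : Q.coeff (d + 1) = 0 :=
    coeff_eq_zero_of_degree_lt (lt_of_le_of_lt hQ (by exact_mod_cast Nat.lt_succ_self d))
  have hRd : R.coeff d = R.leadingCoeff := by
    rw [Polynomial.leadingCoeff, natDegree_eq_of_degree_eq_some hR]
  have hRdne : R.coeff d ≠ 0 := by rw [hRd]; exact leadingCoeff_ne_zero.mpr hRne0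
  have hFlc : F.leadingCoeff = -R.coeff d := by
    rw [Polynomial.leadingCoeff, hFnat, hF, coeff_sub, hQc, coeff_X_mul, zero_sub]
  set c : ℂ := -R.coeff d with hc
  have hcne : c ≠ 0 := neg_ne_zero.mpr hRdne
  -- F = c • nodal
  have hFroots : ∀ i, F.eval (y i) = 0 := by
    intro i
    simp [hF, hfix i, mul_comm]
  have hFeq : F = C c * Lagrange.nodal Finset.univ y := by
    have hmul_deg : (C c * Lagrange.nodal Finset.univ y).degree = ((d + 1 : ℕ) : WithBot ℕ) := by
      rw [degree_C_mul hcne, Lagrange.degree_nodal]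
      simp
    refine Polynomial.eq_of_degree_le_of_eval_finset_eq
      ((Finset.univ : Finset (Fin (d+1))).image y) ?_ ?_ ?_ ?_
    · rw [hFdeg, Finset.card_image_of_injective _ hy]
      simp
    · rw [hFdeg, hmul_deg]
    · rw [hFlc, Polynomial.leadingCoeff_mul, Polynomial.leadingCoeff_C,
        Lagrange.nodal_monic.leadingCoeff, mul_one, hc]
    · intro x hx
      rcases Finset.mem_image.mp hx with ⟨i, _, rfl⟩
      rw [hFroots i, eval_mul, eval_C, Lagrange.eval_nodal_at_node (Finset.mem_univ i), mul_zero]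
  -- derivative of F at nodes
  have hFder : ∀ i, (derivative F).eval (y i)
      = c * ∏ j ∈ Finset.univ.erase i, (y i - y j) := by
    intro i
    rw [hFeq, derivative_C_mul, eval_mul, eval_C,
      Lagrange.eval_nodal_derivative_eval_node_eq (Finset.mem_univ i), Lagrange.eval_nodal]
  -- relation: (1 - lam i) * R(y i) = - F'(y i)
  have hkey : ∀ i, (1 - lam i) * R.eval (y i) = - (derivative F).eval (y i) := by
    intro i
    have h1 : (derivative F).eval (y i)
        = (derivative Q).eval (y i) - R.eval (y i) - y i * (derivative R).eval (y i) := by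
      simp [hF, derivative_mul]
      ring
    have h2 := hlam i
    rw [hfix i] at h2
    have hr := hRne i
    have h3 : ((1 - lam i) * R.eval (y i)) * R.eval (y i)
        = (-(derivative F).eval (y i)) * R.eval (y i) := by
      rw [h1]; linear_combination -h2
    exact mul_right_cancel₀ hr h3
  -- hkey without nlinarith (ℂ is not ordered)
  -- per-term computation
  set G : Polynomial ℂ := R - P with hG
  have hGdeg : G.degree < ((d + 1 : ℕ) : WithBot ℕ) := by
    refine lt_of_le_of_lt (degree_sub_le R P) ?_
    rw [max_lt_iff]
    constructor
    · rw [hR]; exact_mod_cast WithBot.coe_lt_coe.mpr (Nat.lt_succ_self d)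
    · exact lt_trans hP (by exact_mod_cast WithBot.coe_lt_coe.mpr (Nat.lt_succ_self d))
  have hterm : ∀ i, (1 - P.eval (y i) / R.eval (y i)) / (1 - lam i)
      = -c⁻¹ * (G.eval (y i) * Lagrange.nodalWeight Finset.univ y i) := by
    intro i
    have hr := hRne i
    have hL : (1 : ℂ) - lam i ≠ 0 := sub_ne_zero_of_ne (fun h => hlam1 i h.symm)
    have hp : (∏ j ∈ Finset.univ.erase i, (y i - y j)) ≠ 0 := by
      refine Finset.prod_ne_zero_iff.mpr fun j hj => ?_
      exact sub_ne_zero_of_ne (fun h => (Finset.mem_erase.mp hj).1 (hy h).symm)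
    have hw : Lagrange.nodalWeight Finset.univ y i
        = (∏ j ∈ Finset.univ.erase i, (y i - y j))⁻¹ := by
      rw [Lagrange.nodalWeight, ← Finset.prod_inv_distrib]
    have hLr : (1 - lam i) * R.eval (y i)
        = -(c * ∏ j ∈ Finset.univ.erase i, (y i - y j)) := by
      rw [hkey i, hFder i]
    have hGe : G.eval (y i) = R.eval (y i) - P.eval (y i) := by simp [hG]
    rw [hw, hGe]
    field_simp
    ring_nf
    linear_combination (R.eval (y i) - P.eval (y i)) * hLr
  rw [Finset.sum_congr rfl fun i _ => hterm i, ← Finset.mul_sum,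
    ← coeff_eq_sum_nodalWeight d y hy G hGdeg]
  have hPc : P.coeff d = 0 := coeff_eq_zero_of_degree_lt hP
  rw [hG, coeff_sub, hPc, sub_zero, hc]
  field_simp
end

section
/- Let f: P^1 → P^1 be a rational map of degree d ≥ 1 whose fixed points z_1, ..., z_{d+1} are all simple, with multipliers λ_i = f'(z_i) ≠ 1. Then sum_{i=1}^{d+1} 1/(1 - λ_i) = 1. -/
open Polynomial Finset Lagrange

/-- Coefficient `#s - 1` of a Lagrange interpolation: the sum of values times nodal weights. -/
lemma coeff_interpolate_card_sub_one {ι : Type*} [DecidableEq ι] {s : Finset ι} {v : ι → ℂ}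
    (hvs : Set.InjOn v s) (r : ι → ℂ) (n : ℕ) (hn : #s = n + 1) :
    (Lagrange.interpolate s v r).coeff n = ∑ i ∈ s, nodalWeight s v i * r i := by
  rw [interpolate_eq_nodalWeight_mul_nodal_div_X_sub_C, finset_sum_coeff]
  refine Finset.sum_congr rfl fun i hi => ?_
  rw [← nodal_erase_eq_nodal_div hi]
  have hmonic : (nodal (s.erase i) v).Monic := nodal_monic
  have hdeg : (nodal (s.erase i) v).natDegree = n := by
    simp [natDegree_nodal, Finset.card_erase_of_mem hi, hn]
  have : C (nodalWeight s v i) * nodal (s.erase i) v * C (r i)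
      = C (nodalWeight s v i * r i) * nodal (s.erase i) v := by
    rw [map_mul]; ring
  rw [this, coeff_C_mul, ← hdeg, Polynomial.coeff_natDegree, hmonic.leadingCoeff, mul_one]

/-- Fatou–Julia / holomorphic Lefschetz formula on `ℙ¹`: a rational map `P/Q` of degree
`d ≥ 1` whose `d+1` fixed points are all simple (finite, with multipliers `λ i ≠ 1`)
satisfies `∑ 1/(1 - λ i) = 1`. -/
theorem stmt_4 (d : ℕ) (hd : 1 ≤ d) (P Q : Polynomial ℂ)
    (hcop : IsCoprime P Q)
    (hdeg : max P.natDegree Q.natDegree = d)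
    (hinfty : (Polynomial.X * Q - P).degree = ((d + 1 : ℕ) : WithBot ℕ))
    (z : Fin (d + 1) → ℂ) (hz : Function.Injective z)
    (hfix : ∀ i, P.eval (z i) = z i * Q.eval (z i))
    (hQne : ∀ i, Q.eval (z i) ≠ 0)
    (lam : Fin (d + 1) → ℂ)
    (hlam : ∀ i, lam i * (Q.eval (z i)) ^ 2 =
      (derivative P).eval (z i) * Q.eval (z i) - P.eval (z i) * (derivative Q).eval (z i))
    (hlam1 : ∀ i, lam i ≠ 1) :
    ∑ i, 1 / (1 - lam i) = 1 := by
  classical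
  set R : Polynomial ℂ := X * Q - P with hR
  have hvs : Set.InjOn z (Finset.univ : Finset (Fin (d + 1))) := hz.injOn
  have hcard : #(Finset.univ : Finset (Fin (d + 1))) = d + 1 := by simp
  set c : ℂ := Q.coeff d with hc
  -- degrees
  have hRnd : R.natDegree = d + 1 := natDegree_eq_of_degree_eq_some hinfty
  have hRne : R ≠ 0 := Polynomial.ne_zero_of_natDegree_gt (n := 0) (by omega)
  have hPdeg : P.natDegree ≤ d := hdeg ▸ le_max_left _ _
  have hQdeg : Q.natDegree ≤ d := hdeg ▸ le_max_right _ _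
  -- c is the leading coefficient of R
  have hclead : R.leadingCoeff = c := by
    rw [Polynomial.leadingCoeff, hRnd, hR, coeff_sub, coeff_X_mul,
      Polynomial.coeff_eq_zero_of_natDegree_lt (lt_of_le_of_lt hPdeg (Nat.lt_succ_self d)),
      sub_zero]
  have hcne : c ≠ 0 := hclead ▸ Polynomial.leadingCoeff_ne_zero.mpr hRne
  -- R vanishes at the fixed points
  have hReval : ∀ i, R.eval (z i) = 0 := by
    intro i
    simp [hR, hfix i]
  -- R = c * nodal
  set N : Polynomial ℂ := nodal Finset.univ z with hN
  have hNdeg : N.degree = ((d + 1 : ℕ) : WithBot ℕ) := by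
    rw [hN, degree_nodal, hcard]
  have hRN : R = C c * N := by
    refine eq_of_degree_sub_lt_of_eval_index_eq _ hvs ?_ ?_
    · rw [hcard]
      calc (R - C c * N).degree < R.degree := by
            refine degree_sub_lt ?_ hRne ?_
            · rw [hinfty, degree_C_mul hcne, hNdeg]
            · rw [hclead, leadingCoeff_mul, leadingCoeff_C, nodal_monic.leadingCoeff, mul_one]
        _ = ((d + 1 : ℕ) : WithBot ℕ) := hinfty
    · intro i _
      rw [hReval i, eval_mul, eval_C, eval_nodal_at_node (Finset.mem_univ i), mul_zero]
  -- derivative of R at nodes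
  have hRder : ∀ i, (derivative R).eval (z i)
      = c * (nodal ((Finset.univ : Finset (Fin (d+1))).erase i) z).eval (z i) := by
    intro i
    rw [hRN, derivative_C_mul, eval_mul, eval_C,
      eval_nodal_derivative_eval_node_eq (Finset.mem_univ i)]
  -- nodal weights
  set w : Fin (d + 1) → ℂ := nodalWeight Finset.univ z with hw
  have hwne : ∀ i, w i ≠ 0 := fun i => nodalWeight_ne_zero hvs (Finset.mem_univ i)
  have hwinv : ∀ i, (w i)⁻¹ = (nodal ((Finset.univ : Finset (Fin (d+1))).erase i) z).eval (z i) := by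
    intro i
    rw [hw, nodalWeight_eq_eval_nodal_erase_inv, inv_inv]
  -- multiplier relation: (1 - lam i) * Q(z i) = R'(z i)
  have hkey : ∀ i, (1 - lam i) * Q.eval (z i) = c * (w i)⁻¹ := by
    intro i
    have h1 : lam i * Q.eval (z i) = (derivative P).eval (z i) - z i * (derivative Q).eval (z i) := by
      have h2 := hlam i
      rw [hfix i] at h2
      apply mul_right_cancel₀ (hQne i)
      linear_combination h2
    have hder : (derivative R).eval (z i)
        = Q.eval (z i) + z i * (derivative Q).eval (z i) - (derivative P).eval (z i) := by
      have hdR : derivative R = Q + X * derivative Q - derivative P := by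
        rw [hR, derivative_sub, derivative_mul, derivative_X]; ring
      rw [hdR]; simp
    rw [hwinv i, ← hRder i, hder, sub_mul, one_mul, h1]
    ring
  -- term formula
  have hterm : ∀ i, 1 / (1 - lam i) = Q.eval (z i) * w i / c := by
    intro i
    have h1 : (1 : ℂ) - lam i ≠ 0 := sub_ne_zero.mpr (Ne.symm (hlam1 i))
    rw [div_eq_div_iff h1 hcne]
    have h2 : (1 - lam i) * Q.eval (z i) * w i = c := by
      rw [hkey i, mul_assoc, inv_mul_cancel₀ (hwne i), mul_one]
    linear_combination -h2
  -- interpolation identity: ∑ Q(z i) * w i = c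
  have hsum : ∑ i, w i * Q.eval (z i) = c := by
    have hQint : Lagrange.interpolate Finset.univ z (fun i => Q.eval (z i)) = Q :=
      (eq_interpolate hvs (by
        rw [hcard]
        exact lt_of_le_of_lt degree_le_natDegree
          (by exact_mod_cast Nat.lt_succ_of_le hQdeg))).symm
    have := coeff_interpolate_card_sub_one hvs (fun i => Q.eval (z i)) d hcard
    rw [hQint] at this
    rw [← this, hc]
  calc ∑ i, 1 / (1 - lam i) = ∑ i, Q.eval (z i) * w i / c := by
        exact Finset.sum_congr rfl fun i _ => hterm i
    _ = (∑ i, w i * Q.eval (z i)) / c := by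
        rw [Finset.sum_div]
        exact Finset.sum_congr rfl fun i _ => by ring
    _ = 1 := by rw [hsum, div_self hcne]
end

section
/- Let P, Q be polynomials in two variables of degree at most 2 over C, and suppose the system P = 0, Q = 0 has exactly four common solutions p_1, p_2, p_3, p_4 in C^2, each nondegenerate (the Jacobian determinant J = P_x Q_y - P_y Q_x is nonzero at each p_i). Then for every polynomial g of degree at most 1, sum_{i=1}^4 g(p_i)/J(p_i) = 0. -/
/-!
A conic vanishing at three points of a line vanishes on the whole line, so finiteness of the
common zero set forces the four points to be in general position. The conics through four points
in general position form a pencil, spanned by the line pairs `A = L₀₁ L₂₃` and `B = L₀₂ L₁₃`.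
Writing `P = αA + βB` and `Q = γA + δB` gives `J_{P,Q} = (αδ - βγ) J_{A,B}`, and a direct
computation shows `J_{A,B}(pᵢ) wᵢ = ∏ⱼ wⱼ`, where `w` is the affine dependence of the four points
(`∑ wᵢ = 0`, `∑ wᵢ pᵢ = 0`). Hence `∑ g(pᵢ)/J(pᵢ)` is a multiple of `∑ wᵢ g(pᵢ)`, which vanishes
for affine `g`.
-/

open MvPolynomial

/-- The Jacobian determinant of a pair of bivariate polynomials, as a function on `ℂ²`. -/
noncomputable def jacDet (P Q : MvPolynomial (Fin 2) ℂ) (v : Fin 2 → ℂ) : ℂ :=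
  eval v (pderiv 0 P) * eval v (pderiv 1 Q) - eval v (pderiv 1 P) * eval v (pderiv 0 Q)

namespace PlaneConics

theorem natDegree_aeval_le_totalDegree {σ R : Type*} [CommSemiring R] {f : σ → Polynomial R}
    (hf : ∀ i, (f i).natDegree ≤ 1) (P : MvPolynomial σ R) :
    (aeval f P).natDegree ≤ P.totalDegree := by
  classical
  rw [aeval_eq_eval₂Hom, coe_eval₂Hom, eval₂_eq]
  refine Polynomial.natDegree_sum_le_of_forall_le _ _ fun s hs => ?_
  refine (Polynomial.natDegree_C_mul_le _ _).trans <| (Polynomial.natDegree_prod_le _ _).trans ?_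
  refine (Finset.sum_le_sum fun i _ => Polynomial.natDegree_pow_le_of_le (s i) (hf i)).trans ?_
  simpa [Finsupp.sum] using le_totalDegree hs

theorem eval_add_smul_eq_zero {σ K : Type*} [Field K] {P : MvPolynomial σ K} {a d : σ → K}
    {s : Finset K} (hs : P.totalDegree < s.card) (hz : ∀ t ∈ s, eval (a + t • d) P = 0) (t : K) :
    eval (a + t • d) P = 0 := by
  set f : Polynomial K := aeval (fun m => Polynomial.C (a m) + Polynomial.X * Polynomial.C (d m)) P
  have hf : ∀ t, f.eval t = eval (a + t • d) P := fun t => by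
    rw [← Polynomial.coe_aeval_eq_eval, comp_aeval_apply, aeval_eq_eval]
    congr 2
    funext m
    simp only [map_add, map_mul, Polynomial.aeval_C, Polynomial.aeval_X, Pi.add_apply,
      Pi.smul_apply, smul_eq_mul, Algebra.algebraMap_self, RingHom.id_apply]
  have hdeg : f.natDegree ≤ P.totalDegree :=
    natDegree_aeval_le_totalDegree (fun m => by compute_degree) P
  rw [← hf, Polynomial.eq_zero_of_natDegree_lt_card_of_eval_eq_zero' f s
    (fun t ht => (hf t).trans (hz t ht)) (hdeg.trans_lt hs), Polynomial.eval_zero]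

theorem mem_span_monomials_of_totalDegree_le {R : Type*} [CommSemiring R]
    {P : MvPolynomial (Fin 2) R} {n : ℕ} (hP : P.totalDegree ≤ n) :
    P ∈ Submodule.span R
      ((fun e : ℕ × ℕ => (X 0 ^ e.1 * X 1 ^ e.2 : MvPolynomial (Fin 2) R)) '' {e | e.1 + e.2 ≤ n}) := by
  rw [P.as_sum]
  refine Submodule.sum_mem _ fun s hs => ?_
  have hdeg : s 0 + s 1 ≤ n := by
    simpa [Finsupp.sum_fintype, Fin.sum_univ_two] using (le_totalDegree hs).trans hP
  rw [monomial_eq, Finsupp.prod_fintype _ _ (by simp), Fin.prod_univ_two, ← smul_eq_C_mul]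
  exact Submodule.smul_mem _ _ (Submodule.subset_span ⟨(s 0, s 1), hdeg, rfl⟩)

section Lines

variable {K : Type*}

def cross [CommRing K] (a b c : Fin 2 → K) : K :=
  (b 0 - a 0) * (c 1 - a 1) - (b 1 - a 1) * (c 0 - a 0)

noncomputable def line [CommRing K] (a b : Fin 2 → K) : MvPolynomial (Fin 2) K :=
  C (b 0 - a 0) * (X 1 - C (a 1)) - C (b 1 - a 1) * (X 0 - C (a 0))

def GeneralPosition [CommRing K] {ι : Type*} (p : ι → Fin 2 → K) : Prop :=
  ∀ i j k, i ≠ j → i ≠ k → j ≠ k → cross (p i) (p j) (p k) ≠ 0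

section CommRing

variable [CommRing K] (a b c : Fin 2 → K)

@[simp]
theorem eval_line : eval c (line a b) = cross a b c := by
  simp [line, cross]

@[simp]
theorem cross_at_left : cross a b a = 0 := by
  simp [cross]

@[simp]
theorem cross_at_right : cross a b b = 0 := by
  simp only [cross]; ring

theorem totalDegree_line_le [Nontrivial K] : (line a b).totalDegree ≤ 1 := by
  have hX : ∀ (i : Fin 2) (r s : K), (C r * (X i - C s) : MvPolynomial (Fin 2) K).totalDegree ≤ 1 :=
    fun i r s => (totalDegree_mul _ _).trans <| by
      rw [totalDegree_C, zero_add]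
      exact (totalDegree_sub _ _).trans
        (max_le (totalDegree_X i).le ((totalDegree_C s).trans_le zero_le_one))
  exact (totalDegree_sub _ _).trans (max_le (hX _ _ _) (hX _ _ _))

end CommRing

section Field

variable [Field K] {a b c : Fin 2 → K}

theorem exists_eq_add_smul_of_cross_eq_zero (hab : a ≠ b) (h : cross a b c = 0) :
    ∃ t : K, c = a + t • (b - a) := by
  obtain ⟨m, hm⟩ := Function.ne_iff.1 hab
  have hm' : b m - a m ≠ 0 := sub_ne_zero.2 (Ne.symm hm)
  refine ⟨(c m - a m) / (b m - a m), funext fun n => ?_⟩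
  simp only [cross] at h
  fin_cases m <;> fin_cases n <;>
    simp only [Fin.zero_eta, Fin.mk_one, Fin.isValue, ne_eq, Pi.add_apply, Pi.smul_apply,
      Pi.sub_apply, smul_eq_mul] at hm' ⊢ <;>
    field_simp
  · ring
  · linear_combination h
  · linear_combination -h
  · ring

theorem cross_ne_zero_of_finite [Infinite K] {P Q : MvPolynomial (Fin 2) K}
    (hP : P.totalDegree ≤ 2) (hQ : Q.totalDegree ≤ 2)
    (hfin : {v | eval v P = 0 ∧ eval v Q = 0}.Finite)
    (ha : eval a P = 0 ∧ eval a Q = 0) (hb : eval b P = 0 ∧ eval b Q = 0)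
    (hc : eval c P = 0 ∧ eval c Q = 0) (hab : a ≠ b) (hac : a ≠ c) (hbc : b ≠ c) :
    cross a b c ≠ 0 := by
  classical
  intro h
  obtain ⟨t, rfl⟩ := exists_eq_add_smul_of_cross_eq_zero hab h
  have ht0 : t ≠ 0 := by rintro rfl; simp at hac
  have ht1 : t ≠ 1 := by rintro rfl; simp at hbc
  have hcard : ({0, 1, t} : Finset K).card = 3 :=
    Finset.card_eq_three.2 ⟨0, 1, t, zero_ne_one, ht0.symm, ht1.symm, rfl⟩
  have hline : ∀ R : MvPolynomial (Fin 2) K, R.totalDegree ≤ 2 → eval a R = 0 → eval b R = 0 →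
      eval (a + t • (b - a)) R = 0 → ∀ s : K, eval (a + s • (b - a)) R = 0 := by
    intro R hR h0 h1 ht
    refine eval_add_smul_eq_zero ((Nat.lt_succ_of_le hR).trans_eq hcard.symm) ?_
    simp [h0, h1, ht]
  refine hfin.not_infinite (Set.infinite_of_injective_forall_mem
    (f := fun s : K => a + s • (b - a)) ?_
    fun s => ⟨hline P hP ha.1 hb.1 hc.1 s, hline Q hQ ha.2 hb.2 hc.2 s⟩)
  intro s s' hs
  exact smul_left_injective K (sub_ne_zero.2 hab.symm) (add_left_cancel hs)

end Field

end Lines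

section Conics

variable {K : Type*} [Field K]

noncomputable def conicMonomial : Fin 6 → MvPolynomial (Fin 2) K :=
  ![1, X 0, X 1, X 0 ^ 2, X 0 * X 1, X 1 ^ 2]

noncomputable def conic : (Fin 6 → K) →ₗ[K] MvPolynomial (Fin 2) K :=
  Fintype.linearCombination K conicMonomial

theorem mem_range_conic {R : MvPolynomial (Fin 2) K} (hR : R.totalDegree ≤ 2) :
    R ∈ LinearMap.range conic := by
  rw [conic, Fintype.range_linearCombination]
  refine Submodule.span_mono ?_ (mem_span_monomials_of_totalDegree_le hR)
  rintro _ ⟨⟨i, j⟩, hij, rfl⟩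
  change i + j ≤ 2 at hij
  obtain ⟨rfl, rfl⟩ | ⟨rfl, rfl⟩ | ⟨rfl, rfl⟩ | ⟨rfl, rfl⟩ | ⟨rfl, rfl⟩ | ⟨rfl, rfl⟩ :
      (i = 0 ∧ j = 0) ∨ (i = 1 ∧ j = 0) ∨ (i = 0 ∧ j = 1) ∨ (i = 2 ∧ j = 0) ∨ (i = 1 ∧ j = 1) ∨
        (i = 0 ∧ j = 2) := by omega
  exacts [⟨0, by simp [conicMonomial]⟩, ⟨1, by simp [conicMonomial]⟩, ⟨2, by simp [conicMonomial]⟩,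
    ⟨3, by simp [conicMonomial]⟩, ⟨4, by simp [conicMonomial]⟩, ⟨5, by simp [conicMonomial]⟩]

noncomputable def evalConic {ι : Type*} (p : ι → Fin 2 → K) : (Fin 6 → K) →ₗ[K] (ι → K) :=
  LinearMap.pi fun i => (aeval (p i)).toLinearMap ∘ₗ conic

@[simp]
theorem evalConic_apply {ι : Type*} (p : ι → Fin 2 → K) (u : Fin 6 → K) (i : ι) :
    evalConic p u i = eval (p i) (conic u) :=
  rfl

noncomputable def linePair (p : Fin 4 → Fin 2 → K) (i j k l : Fin 4) : MvPolynomial (Fin 2) K :=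
  line (p i) (p j) * line (p k) (p l)

@[simp]
theorem eval_linePair (p : Fin 4 → Fin 2 → K) (i j k l : Fin 4) (v : Fin 2 → K) :
    eval v (linePair p i j k l) = cross (p i) (p j) v * cross (p k) (p l) v := by
  simp [linePair]

theorem totalDegree_linePair_le (p : Fin 4 → Fin 2 → K) (i j k l : Fin 4) :
    (linePair p i j k l).totalDegree ≤ 2 :=
  (totalDegree_mul _ _).trans (add_le_add (totalDegree_line_le _ _) (totalDegree_line_le _ _))

variable {p : Fin 4 → Fin 2 → K}

theorem evalConic_surjective (hp : GeneralPosition p) : Function.Surjective (evalConic p) := by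
  classical
  have hsingle : ∀ i, Pi.single i 1 ∈ LinearMap.range (evalConic p) := by
    intro i
    -- indices are taken mod 4: this line pair passes through the three points other than `p i`
    obtain ⟨u, hu⟩ := mem_range_conic (totalDegree_linePair_le p (i + 1) (i + 2) (i + 1) (i + 3))
    have hc : eval (p i) (conic u) ≠ 0 := by
      rw [hu, eval_linePair]
      exact mul_ne_zero (hp _ _ _ (by omega) (by omega) (by omega))
        (hp _ _ _ (by omega) (by omega) (by omega))
    refine ⟨(eval (p i) (conic u))⁻¹ • u, funext fun m => ?_⟩
    obtain rfl | rfl | rfl | rfl : m = i ∨ m = i + 1 ∨ m = i + 2 ∨ m = i + 3 := by omega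
    · simpa using inv_mul_cancel₀ hc
    all_goals simp [hu]
  rw [← LinearMap.range_eq_top, eq_top_iff, ← (Pi.basisFun K (Fin 4)).span_eq, Submodule.span_le]
  rintro _ ⟨i, rfl⟩
  simpa using hsingle i

theorem finrank_ker_evalConic (hp : GeneralPosition p) :
    Module.finrank K (LinearMap.ker (evalConic p)) = 2 := by
  have h := (evalConic p).finrank_range_add_finrank_ker
  rw [LinearMap.range_eq_top.2 (evalConic_surjective hp), finrank_top, Module.finrank_fin_fun,
    Module.finrank_fin_fun] at h
  omega

theorem mem_span_pair_of_eval_eq_zero (hp : GeneralPosition p) {A B R : MvPolynomial (Fin 2) K}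
    (hA : A.totalDegree ≤ 2) (hB : B.totalDegree ≤ 2) (hR : R.totalDegree ≤ 2)
    (hAz : ∀ i, eval (p i) A = 0) (hBz : ∀ i, eval (p i) B = 0) (hRz : ∀ i, eval (p i) R = 0)
    (hAB : LinearIndependent K ![A, B]) : R ∈ Submodule.span K {A, B} := by
  obtain ⟨uA, rfl⟩ := mem_range_conic hA
  obtain ⟨uB, rfl⟩ := mem_range_conic hB
  obtain ⟨uR, rfl⟩ := mem_range_conic hR
  have hker : ∀ {u}, (∀ i, eval (p i) (conic u) = 0) → u ∈ LinearMap.ker (evalConic p) :=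
    fun hu => LinearMap.mem_ker.2 (funext hu)
  have hindep : LinearIndependent K ![uA, uB] :=
    LinearIndependent.of_comp conic <| by
      convert hAB using 1
      ext i; fin_cases i <;> rfl
  have hspan : Submodule.span K {uA, uB} = LinearMap.ker (evalConic p) := by
    refine Submodule.eq_of_le_of_finrank_le ?_ ?_
    · exact Submodule.span_le.2
        (Set.insert_subset_iff.2 ⟨hker hAz, Set.singleton_subset_iff.2 (hker hBz)⟩)
    · rw [finrank_ker_evalConic hp, ← Matrix.range_cons_cons_empty, finrank_span_eq_card hindep]
      simp
  obtain ⟨a, b, h⟩ := Submodule.mem_span_pair.1 (hspan ▸ hker hRz)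
  exact Submodule.mem_span_pair.2 ⟨a, b, by rw [← h, map_add, map_smul, map_smul]⟩

end Conics

section AffineWeights

variable {K : Type*}

/-- The signed `3 × 3` minors of the points `(1, pᵢ)`, i.e. the coefficients of the affine
dependence `∑ wᵢ = 0`, `∑ wᵢ pᵢ = 0`. -/
def affineWeights [CommRing K] (p : Fin 4 → Fin 2 → K) : Fin 4 → K :=
  ![cross (p 1) (p 2) (p 3), -cross (p 0) (p 2) (p 3), cross (p 0) (p 1) (p 3),
    -cross (p 0) (p 1) (p 2)]

theorem sum_affineWeights_mul_eval_eq_zero [CommRing K] (p : Fin 4 → Fin 2 → K)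
    {g : MvPolynomial (Fin 2) K} (hg : g.totalDegree ≤ 1) :
    ∑ i, affineWeights p i * eval (p i) g = 0 := by
  let Λ : MvPolynomial (Fin 2) K →ₗ[K] K := ∑ i, affineWeights p i • (aeval (p i)).toLinearMap
  have hΛ : ∀ g, Λ g = ∑ i, affineWeights p i * eval (p i) g := fun g => by simp [Λ]
  rw [← hΛ, ← LinearMap.mem_ker]
  refine Submodule.span_le.2 ?_ (mem_span_monomials_of_totalDegree_le hg)
  rintro _ ⟨⟨i, j⟩, hij, rfl⟩
  change i + j ≤ 1 at hij
  obtain ⟨rfl, rfl⟩ | ⟨rfl, rfl⟩ | ⟨rfl, rfl⟩ :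
      (i = 0 ∧ j = 0) ∨ (i = 1 ∧ j = 0) ∨ (i = 0 ∧ j = 1) := by omega
  all_goals
    simp only [pow_zero, pow_one, mul_one, one_mul, SetLike.mem_coe, LinearMap.mem_ker, hΛ, map_one,
      eval_X, Fin.sum_univ_four, affineWeights, cross, Matrix.cons_val_zero, Matrix.cons_val_one,
      Matrix.cons_val, Fin.isValue]
    ring

theorem affineWeights_ne_zero [CommRing K] {p : Fin 4 → Fin 2 → K} (hp : GeneralPosition p)
    (i : Fin 4) : affineWeights p i ≠ 0 := by
  fin_cases i <;>
    simp only [affineWeights, Matrix.cons_val_zero, Matrix.cons_val_one, Matrix.cons_val, Fin.zero_eta,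
      Fin.mk_one, Fin.reduceFinMk, Fin.isValue, ne_eq, neg_eq_zero] <;>
    exact hp _ _ _ (by decide) (by decide) (by decide)

end AffineWeights

section Jacobian

theorem jacDet_mul_mul (F G H L : MvPolynomial (Fin 2) ℂ) (v : Fin 2 → ℂ) :
    jacDet (F * G) (H * L) v =
      eval v F * eval v H * jacDet G L v + eval v F * eval v L * jacDet G H v +
        eval v G * eval v H * jacDet F L v + eval v G * eval v L * jacDet F H v := by
  simp only [jacDet, Derivation.leibniz, smul_eq_mul, map_add, map_mul]
  ring

theorem jacDet_smul_add_smul (a b c d : ℂ) (A B : MvPolynomial (Fin 2) ℂ) (v : Fin 2 → ℂ) :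
    jacDet (a • A + b • B) (c • A + d • B) v = (a * d - b * c) * jacDet A B v := by
  simp only [jacDet, map_add, Derivation.map_smul, smul_eval]
  ring

theorem jacDet_line_line (a b c d v : Fin 2 → ℂ) :
    jacDet (line a b) (line c d) v = (b 0 - a 0) * (d 1 - c 1) - (b 1 - a 1) * (d 0 - c 0) := by
  simp only [jacDet, line, map_sub, Derivation.leibniz, pderiv_X, derivation_C,
    Pi.single_eq_same, Pi.single_eq_of_ne, ne_eq, one_ne_zero, zero_ne_one, not_false_eq_true,
    sub_self, smul_eq_mul, mul_zero, add_zero, sub_zero, mul_one, zero_sub, neg_sub, eval_C,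
    Fin.isValue]
  ring

theorem linearIndependent_pair_of_jacDet_ne_zero {A B : MvPolynomial (Fin 2) ℂ} {v : Fin 2 → ℂ}
    (h : jacDet A B v ≠ 0) : LinearIndependent ℂ ![A, B] := by
  refine LinearIndependent.pair_iff.2 fun s t hst => ⟨?_, ?_⟩
  · have := jacDet_smul_add_smul s t 0 1 A B v
    simp_all [jacDet]
  · have := jacDet_smul_add_smul 1 0 s t A B v
    simp_all [jacDet]

theorem jacDet_linePair_mul_affineWeights (p : Fin 4 → Fin 2 → ℂ) (i : Fin 4) :
    jacDet (linePair p 0 1 2 3) (linePair p 0 2 1 3) (p i) * affineWeights p i =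
      ∏ j, affineWeights p j := by
  fin_cases i <;>
    simp only [linePair, jacDet_mul_mul, eval_line, jacDet_line_line, affineWeights, cross,
      Fin.prod_univ_four, Matrix.cons_val_zero, Matrix.cons_val_one, Matrix.cons_val, Fin.zero_eta,
      Fin.mk_one, Fin.reduceFinMk, Fin.isValue] <;>
    ring

variable {p : Fin 4 → Fin 2 → ℂ}

theorem jacDet_linePair_ne_zero (hp : GeneralPosition p) (i : Fin 4) :
    jacDet (linePair p 0 1 2 3) (linePair p 0 2 1 3) (p i) ≠ 0 :=
  left_ne_zero_of_mul <| (jacDet_linePair_mul_affineWeights p i).symm ▸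
    Finset.prod_ne_zero_iff.2 fun j _ => affineWeights_ne_zero hp j

theorem mem_span_linePair (hp : GeneralPosition p) {R : MvPolynomial (Fin 2) ℂ}
    (hR : R.totalDegree ≤ 2) (hRz : ∀ i, eval (p i) R = 0) :
    R ∈ Submodule.span ℂ {linePair p 0 1 2 3, linePair p 0 2 1 3} :=
  mem_span_pair_of_eval_eq_zero hp (totalDegree_linePair_le p 0 1 2 3)
    (totalDegree_linePair_le p 0 2 1 3) hR (fun i => by fin_cases i <;> simp)
    (fun i => by fin_cases i <;> simp) hRz
    (linearIndependent_pair_of_jacDet_ne_zero (jacDet_linePair_ne_zero hp 0))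

theorem sum_eval_div_jacDet_linePair (hp : GeneralPosition p) {g : MvPolynomial (Fin 2) ℂ}
    (hg : g.totalDegree ≤ 1) :
    ∑ i, eval (p i) g / jacDet (linePair p 0 1 2 3) (linePair p 0 2 1 3) (p i) = 0 := by
  calc ∑ i, eval (p i) g / jacDet (linePair p 0 1 2 3) (linePair p 0 2 1 3) (p i)
      = ∑ i, affineWeights p i * eval (p i) g / ∏ j, affineWeights p j := by
        refine Finset.sum_congr rfl fun i _ => ?_
        rw [← jacDet_linePair_mul_affineWeights, mul_comm (affineWeights p i),
          mul_div_mul_right _ _ (affineWeights_ne_zero hp i)]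
    _ = 0 := by rw [← Finset.sum_div, sum_affineWeights_mul_eval_eq_zero p hg, zero_div]

end Jacobian

end PlaneConics

open PlaneConics

theorem stmt_5_general (P Q : MvPolynomial (Fin 2) ℂ)
    (hP : P.totalDegree ≤ 2) (hQ : Q.totalDegree ≤ 2)
    (p : Fin 4 → (Fin 2 → ℂ)) (hinj : Function.Injective p)
    (hPz : ∀ i, eval (p i) P = 0) (hQz : ∀ i, eval (p i) Q = 0)
    (hall : ∀ v : Fin 2 → ℂ, eval v P = 0 → eval v Q = 0 → ∃ i, v = p i)
    (g : MvPolynomial (Fin 2) ℂ) (hg : g.totalDegree ≤ 1) :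
    ∑ i, eval (p i) g / jacDet P Q (p i) = 0 := by
  have hfin : {v | eval v P = 0 ∧ eval v Q = 0}.Finite :=
    (Set.finite_range p).subset fun v hv => (hall v hv.1 hv.2).imp fun _ hi => hi.symm
  have hp : GeneralPosition p := fun i j k hij hik hjk =>
    cross_ne_zero_of_finite hP hQ hfin ⟨hPz i, hQz i⟩ ⟨hPz j, hQz j⟩ ⟨hPz k, hQz k⟩
      (hinj.ne hij) (hinj.ne hik) (hinj.ne hjk)
  obtain ⟨α, β, rfl⟩ := Submodule.mem_span_pair.1 (mem_span_linePair hp hP hPz)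
  obtain ⟨γ, δ, rfl⟩ := Submodule.mem_span_pair.1 (mem_span_linePair hp hQ hQz)
  simp_rw [jacDet_smul_add_smul, mul_comm (α * δ - β * γ), ← div_div, ← Finset.sum_div,
    sum_eval_div_jacDet_linePair hp hg, zero_div]

/-- Jacobi's relation for the intersection of two conics: if `P = Q = 0` has exactly four
common solutions in `ℂ²`, all nondegenerate, then `∑ g(pᵢ)/J(pᵢ) = 0` for every affine
linear `g`. -/
theorem stmt_5 (P Q : MvPolynomial (Fin 2) ℂ)
    (hP : P.totalDegree ≤ 2) (hQ : Q.totalDegree ≤ 2)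
    (p : Fin 4 → (Fin 2 → ℂ)) (hinj : Function.Injective p)
    (hPz : ∀ i, eval (p i) P = 0) (hQz : ∀ i, eval (p i) Q = 0)
    (hall : ∀ v : Fin 2 → ℂ, eval v P = 0 → eval v Q = 0 → ∃ i, v = p i)
    (hnd : ∀ i, jacDet P Q (p i) ≠ 0)
    (g : MvPolynomial (Fin 2) ℂ) (hg : g.totalDegree ≤ 1) :
    ∑ i, eval (p i) g / jacDet P Q (p i) = 0 :=
  stmt_5_general P Q hP hQ p hinj hPz hQz hall g hg
end

section
/- Let H = P ∂/∂x + Q ∂/∂y be a quadratic vector field on C^2 (P, Q polynomials of degree at most 2) with exactly four nondegenerate singular points p_1, ..., p_4. Then sum_{i=1}^4 tr(DH(p_i))/det(DH(p_i)) = 0 and sum_{i=1}^4 1/det(DH(p_i)) = 0. -/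
/-!
No three of the `pᵢ` are collinear: a conic through three points of a line contains the line, so
`P` and `Q` would have infinitely many common zeros. Evaluation at four points in general position
maps the (at most) 6-dimensional space of conics onto `ℂ⁴`, so the conics through the `pᵢ` form a
pencil, spanned by the line pairs `A = p₀p₁ · p₂p₃` and `B = p₀p₂ · p₁p₃`. Writing
`(P, Q) = M (A, B)` with a constant matrix `M`, we get `det DH = det M · det D(A, B)`, and at `pᵢ`
the latter is a product of triangle orientations: `cᵢ · det D(A, B)(pᵢ) = ∏ⱼ cⱼ`, where `cᵢ` is
the signed orientation of the other three points. Hence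
`∑ g(pᵢ) / det DH(pᵢ) = (∑ g(pᵢ) cᵢ) / (det M ∏ⱼ cⱼ)`, and `∑ g(pᵢ) cᵢ` is the cofactor expansion
of a `4 × 4` determinant with columns `1, x, y, g`, which vanishes for every affine `g`. Take
`g = P_x + Q_y` and `g = 1`.
-/

open MvPolynomial

/-- The trace of the linearization of `H = P ∂/∂x + Q ∂/∂y` at a point. -/
noncomputable def jacTr (P Q : MvPolynomial (Fin 2) ℂ) (v : Fin 2 → ℂ) : ℂ :=
  eval v (pderiv 0 P) + eval v (pderiv 1 Q)

namespace MvPolynomial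

theorem natDegree_aeval_le_totalDegree {σ R : Type*} [CommSemiring R] {g : σ → Polynomial R}
    (hg : ∀ i, (g i).natDegree ≤ 1) (f : MvPolynomial σ R) :
    (aeval g f).natDegree ≤ f.totalDegree := by
  conv_lhs => rw [f.as_sum, map_sum]
  refine Polynomial.natDegree_sum_le_of_forall_le _ _ fun m hm => ?_
  rw [aeval_monomial, ← Polynomial.C_eq_algebraMap]
  refine (Polynomial.natDegree_C_mul_le _ _).trans <| (Polynomial.natDegree_prod_le _ _).trans ?_
  refine le_trans (Finset.sum_le_sum fun i _ => ?_) (le_totalDegree hm)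
  calc ((g i) ^ m i).natDegree ≤ m i * (g i).natDegree := Polynomial.natDegree_pow_le
    _ ≤ m i := by simpa using Nat.mul_le_mul_left (m i) (hg i)

theorem eval_add_smul_eq_zero_of_totalDegree_lt_card {σ K : Type*} [Field K]
    {f : MvPolynomial σ K} {a u : σ → K} {s : Finset K} (hs : f.totalDegree < s.card)
    (hf : ∀ t ∈ s, eval (a + t • u) f = 0) (t : K) : eval (a + t • u) f = 0 := by
  set g : σ → Polynomial K := fun i => Polynomial.C (u i) * Polynomial.X + Polynomial.C (a i)
  have heval : ∀ t, (aeval g f).eval t = eval (a + t • u) f := by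
    intro t
    rw [← Polynomial.coe_aeval_eq_eval, ← AlgHom.comp_apply, comp_aeval, aeval_eq_eval]
    congr 2; funext i; simp [g]; ring
  have hdeg : (aeval g f).natDegree ≤ f.totalDegree :=
    natDegree_aeval_le_totalDegree (fun _ => Polynomial.natDegree_linear_le) f
  have hzero := Polynomial.eq_zero_of_natDegree_lt_card_of_eval_eq_zero' _ s
    (fun t ht => (heval t).trans (hf t ht)) (hdeg.trans_lt hs)
  rw [← heval, hzero, Polynomial.eval_zero]

theorem totalDegree_pderiv_le {σ R : Type*} [CommSemiring R] (i : σ) (f : MvPolynomial σ R) :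
    (pderiv i f).totalDegree ≤ f.totalDegree - 1 := by
  classical
  conv_lhs => rw [f.as_sum, map_sum]
  refine totalDegree_finsetSum_le fun m hm => ?_
  rw [pderiv_monomial]
  rcases Nat.eq_zero_or_pos (m i) with h | h
  · simp [h]
  · have hm' : Finsupp.degree m = Finsupp.degree (m - Finsupp.single i 1) + 1 := by
      have hle : Finsupp.single i 1 ≤ m := Finsupp.single_le_iff.mpr h
      conv_lhs => rw [← tsub_add_cancel_of_le hle]
      rw [map_add, Finsupp.degree_single]
    have h1 : Finsupp.degree m ≤ f.totalDegree := le_totalDegree hm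
    have h2 : (monomial (m - Finsupp.single i 1) (coeff m f * m i)).totalDegree ≤
        Finsupp.degree (m - Finsupp.single i 1) := totalDegree_monomial_le _ _
    omega

theorem eq_C_add_sum_C_mul_X_of_totalDegree_le_one {σ R : Type*} [Fintype σ] [CommSemiring R]
    {g : MvPolynomial σ R} (hg : g.totalDegree ≤ 1) :
    g = C (coeff 0 g) + ∑ i, C (coeff (Finsupp.single i 1) g) * X i := by
  classical
  ext m
  simp only [coeff_add, coeff_C, coeff_sum, coeff_C_mul, coeff_X, mul_ite, mul_one, mul_zero]
  by_cases hm : m ∈ g.support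
  · rcases Nat.le_one_iff_eq_zero_or_eq_one.mp ((le_totalDegree hm).trans hg) with h | h
    · obtain rfl : m = 0 := (Finsupp.degree_eq_zero_iff m).mp h
      simp
    · obtain ⟨a, rfl⟩ := (Finsupp.sum_eq_one_iff m).mp h
      simp [Finsupp.single_left_inj, eq_comm (a := (0 : σ →₀ ℕ))]
  · have h0 := notMem_support_iff.mp hm
    rw [h0, Finset.sum_eq_zero fun i _ => by split_ifs with h <;> simp [h, h0]]
    split_ifs with h <;> simp [h, h0]

theorem finrank_restrictTotalDegree_fin_two_two_le (K : Type*) [Field K] :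
    Module.finrank K (restrictTotalDegree (Fin 2) K 2) ≤ 6 := by
  rw [restrictTotalDegree, Module.finrank_eq_nat_card_basis (basisRestrictSupport K _)]
  let T : Finset (ℕ × ℕ) := (Finset.range 3 ×ˢ Finset.range 3).filter fun ab => ab.1 + ab.2 ≤ 2
  let f : {n : Fin 2 →₀ ℕ | (n.sum fun _ e => e) ≤ 2} → T := fun n =>
    ⟨(n.1 0, n.1 1), by
      have : n.1 0 + n.1 1 ≤ 2 := by simpa [Finsupp.sum_fintype, Fin.sum_univ_two] using n.2
      simp only [T, Finset.mem_filter, Finset.mem_product, Finset.mem_range]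
      omega⟩
  have hf : Function.Injective f := fun n n' h => by
    simp only [f, Subtype.mk.injEq, Prod.mk.injEq] at h
    ext i; fin_cases i <;> simp [h.1, h.2]
  calc _ ≤ Nat.card T := Nat.card_le_card_of_injective f hf
    _ = 6 := by rw [Nat.card_eq_fintype_card, Fintype.card_coe]; rfl

noncomputable def evalOn {ι σ R : Type*} [CommSemiring R] (p : ι → σ → R) :
    MvPolynomial σ R →ₗ[R] ι → R :=
  LinearMap.pi fun i => (aeval (p i)).toLinearMap

@[simp]
theorem evalOn_apply {ι σ R : Type*} [CommSemiring R] (p : ι → σ → R) (f : MvPolynomial σ R)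
    (i : ι) : evalOn p f i = eval (p i) f :=
  rfl

end MvPolynomial

section PlaneGeometry

variable {K : Type*} [Field K]

/-- Twice the signed area of the triangle `abc`; as a function of `c` it cuts out the line `ab`. -/
def orient (a b c : Fin 2 → K) : K :=
  (b 0 - a 0) * (c 1 - a 1) - (b 1 - a 1) * (c 0 - a 0)

@[simp]
theorem orient_self_left (a b : Fin 2 → K) : orient a b a = 0 := by
  simp [orient]

@[simp]
theorem orient_self_right (a b : Fin 2 → K) : orient a b b = 0 := by
  rw [orient]; ring

def NoThreeCollinear {ι : Type*} (p : ι → Fin 2 → K) : Prop :=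
  ∀ ⦃i j k⦄, i ≠ j → i ≠ k → j ≠ k → orient (p i) (p j) (p k) ≠ 0

theorem exists_eq_add_smul_sub_of_orient_eq_zero {a b c : Fin 2 → K} (hab : a ≠ b)
    (h : orient a b c = 0) : ∃ τ : K, c = a + τ • (b - a) := by
  have hab' : b 0 - a 0 ≠ 0 ∨ b 1 - a 1 ≠ 0 := by
    by_contra! h'
    exact hab <| funext <|
      Fin.forall_fin_two.mpr ⟨(sub_eq_zero.mp h'.1).symm, (sub_eq_zero.mp h'.2).symm⟩
  unfold orient at h
  rcases hab' with h0 | h1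
  · refine ⟨(c 0 - a 0) / (b 0 - a 0), funext <| Fin.forall_fin_two.mpr ⟨?_, ?_⟩⟩ <;>
      simp only [Pi.add_apply, Pi.smul_apply, Pi.sub_apply, smul_eq_mul] <;> field_simp
    · ring
    · linear_combination h
  · refine ⟨(c 1 - a 1) / (b 1 - a 1), funext <| Fin.forall_fin_two.mpr ⟨?_, ?_⟩⟩ <;>
      simp only [Pi.add_apply, Pi.smul_apply, Pi.sub_apply, smul_eq_mul] <;> field_simp
    · linear_combination -h
    · ring

theorem noThreeCollinear_of_common_zeros [Infinite K] {ι : Type*} [Finite ι]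
    {P Q : MvPolynomial (Fin 2) K} (hP : P.totalDegree ≤ 2) (hQ : Q.totalDegree ≤ 2)
    {p : ι → Fin 2 → K} (hinj : Function.Injective p)
    (hPz : ∀ i, eval (p i) P = 0) (hQz : ∀ i, eval (p i) Q = 0)
    (hall : ∀ v, eval v P = 0 → eval v Q = 0 → ∃ i, v = p i) : NoThreeCollinear p := by
  classical
  intro i j k hij hik hjk hcol
  have hu : p j - p i ≠ 0 := sub_ne_zero.mpr (hinj.ne hij.symm)
  obtain ⟨τ, hτ⟩ := exists_eq_add_smul_sub_of_orient_eq_zero (hinj.ne hij) hcol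
  have hτ0 : τ ≠ 0 := by rintro rfl; exact hik (hinj (by simpa using hτ.symm))
  have hτ1 : τ ≠ 1 := by rintro rfl; exact hjk (hinj (by simp [hτ]))
  have hcard : ({0, 1, τ} : Finset K).card = 3 :=
    Finset.card_eq_three.mpr ⟨0, 1, τ, zero_ne_one, hτ0.symm, hτ1.symm, rfl⟩
  have hline : ∀ f : MvPolynomial (Fin 2) K, f.totalDegree ≤ 2 → (∀ m, eval (p m) f = 0) →
      ∀ t : K, eval (p i + t • (p j - p i)) f = 0 := fun f hf hz =>
    eval_add_smul_eq_zero_of_totalDegree_lt_card (s := {0, 1, τ}) (by rw [hcard]; omega) <| by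
      simp only [Finset.mem_insert, Finset.mem_singleton]
      rintro t (rfl | rfl | rfl) <;> simp [← hτ, hz]
  choose m hm using fun t => hall _ (hline P hP hPz t) (hline Q hQ hQz t)
  refine not_injective_infinite_finite m fun s t hst => smul_left_injective K hu ?_
  simpa using (hm s).trans ((congrArg p hst).trans (hm t).symm)

end PlaneGeometry

section Conics

variable {K : Type*} [Field K]

noncomputable def lineThrough (a b : Fin 2 → K) : MvPolynomial (Fin 2) K :=
  C (b 0 - a 0) * (X 1 - C (a 1)) - C (b 1 - a 1) * (X 0 - C (a 0))

@[simp]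
theorem eval_lineThrough (a b c : Fin 2 → K) : eval c (lineThrough a b) = orient a b c := by
  simp [lineThrough, orient]

@[simp]
theorem pderiv_zero_lineThrough (a b : Fin 2 → K) :
    pderiv 0 (lineThrough a b) = C (a 1 - b 1) := by
  simp [lineThrough]

@[simp]
theorem pderiv_one_lineThrough (a b : Fin 2 → K) :
    pderiv 1 (lineThrough a b) = C (b 0 - a 0) := by
  simp [lineThrough]

theorem totalDegree_lineThrough_le (a b : Fin 2 → K) : (lineThrough a b).totalDegree ≤ 1 := by
  have h : ∀ (c d : K) (i : Fin 2), (C c * (X i - C d) : MvPolynomial (Fin 2) K).totalDegree ≤ 1 :=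
    fun c d i => (totalDegree_mul _ _).trans <| by
      simpa using (totalDegree_sub_C_le (X i) d).trans (totalDegree_X i).le
  exact (totalDegree_sub _ _).trans (max_le (h _ _ _) (h _ _ _))

noncomputable def linePair (a b c d : Fin 2 → K) : MvPolynomial (Fin 2) K :=
  lineThrough a b * lineThrough c d

theorem linePair_mem_restrictTotalDegree (a b c d : Fin 2 → K) :
    linePair a b c d ∈ restrictTotalDegree (Fin 2) K 2 :=
  (mem_restrictTotalDegree _ _ _).mpr <| (totalDegree_mul _ _).trans <|
    add_le_add (totalDegree_lineThrough_le a b) (totalDegree_lineThrough_le c d)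

/-- Up to a global sign, the cofactors along the last column of the `4 × 4` matrix with rows
`(1, pᵢ 0, pᵢ 1, *)`. -/
def cofactor (p : Fin 4 → Fin 2 → K) (i : Fin 4) : K :=
  (-1) ^ (i : ℕ) * orient (p (i.succAbove 0)) (p (i.succAbove 1)) (p (i.succAbove 2))

theorem sum_eval_mul_cofactor {p : Fin 4 → Fin 2 → K} {g : MvPolynomial (Fin 2) K}
    (hg : g.totalDegree ≤ 1) : ∑ i, eval (p i) g * cofactor p i = 0 := by
  rw [eq_C_add_sum_C_mul_X_of_totalDegree_le_one hg]
  simp [Fin.sum_univ_four, Fin.sum_univ_two, cofactor, orient, Fin.succAbove]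
  ring

namespace NoThreeCollinear

variable {p : Fin 4 → Fin 2 → K} (hp : NoThreeCollinear p)
include hp

theorem cofactor_ne_zero (i : Fin 4) : cofactor p i ≠ 0 := by
  have h := Fin.succAbove_right_injective (p := i)
  exact mul_ne_zero (by simp) (hp (h.ne (by decide)) (h.ne (by decide)) (h.ne (by decide)))

theorem range_evalOn_domRestrict_eq_top :
    LinearMap.range ((evalOn p).domRestrict (restrictTotalDegree (Fin 2) K 2)) = ⊤ := by
  set ev := (evalOn p).domRestrict (restrictTotalDegree (Fin 2) K 2)
  have hothers : ∀ i m : Fin 4, m ≠ i → m = i + 1 ∨ m = i + 2 ∨ m = i + 3 := by decide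
  have hsingle : ∀ i, Pi.single i 1 ∈ LinearMap.range ev := by
    intro i
    set L := linePair (p (i + 1)) (p (i + 2)) (p (i + 1)) (p (i + 3))
    have hLi : eval (p i) L ≠ 0 := by
      simp only [L, linePair, eval_mul, eval_lineThrough]
      refine mul_ne_zero (hp ?_ ?_ ?_) (hp ?_ ?_ ?_) <;> revert i <;> decide
    refine ⟨(eval (p i) L)⁻¹ • ⟨L, linePair_mem_restrictTotalDegree _ _ _ _⟩, funext fun m => ?_⟩
    rw [LinearMap.map_smul, Pi.smul_apply]
    rcases eq_or_ne m i with rfl | hm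
    · simp [ev, hLi]
    · rcases hothers i m hm with rfl | rfl | rfl <;> simp [ev, L, linePair, hm]
  exact eq_top_iff.mpr <| (Pi.basisFun K (Fin 4)).span_eq.symm.le.trans <|
    Submodule.span_le.mpr <| Set.range_subset_iff.mpr fun i => by simpa using hsingle i

theorem finrank_ker_evalOn_domRestrict_le :
    Module.finrank K (LinearMap.ker ((evalOn p).domRestrict (restrictTotalDegree (Fin 2) K 2))) ≤
      2 := by
  have h := ((evalOn p).domRestrict (restrictTotalDegree (Fin 2) K 2)).finrank_range_add_finrank_ker
  rw [hp.range_evalOn_domRestrict_eq_top, finrank_top, Module.finrank_fin_fun] at h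
  have := finrank_restrictTotalDegree_fin_two_two_le K
  omega

end NoThreeCollinear

end Conics

theorem jacDet_smul_add_smul (F G : MvPolynomial (Fin 2) ℂ) (a b c d : ℂ) (v : Fin 2 → ℂ) :
    jacDet (a • F + b • G) (c • F + d • G) v = (a * d - b * c) * jacDet F G v := by
  simp [jacDet]
  ring

theorem cofactor_mul_jacDet_linePair (p : Fin 4 → Fin 2 → ℂ) (i : Fin 4) :
    cofactor p i *
        jacDet (linePair (p 0) (p 1) (p 2) (p 3)) (linePair (p 0) (p 2) (p 1) (p 3)) (p i) =
      ∏ j, cofactor p j := by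
  fin_cases i <;>
    simp [jacDet, linePair, cofactor, orient, Fin.prod_univ_four, Fin.succAbove] <;> ring

namespace NoThreeCollinear

variable {p : Fin 4 → Fin 2 → ℂ} (hp : NoThreeCollinear p)
include hp

theorem linearIndependent_linePair :
    LinearIndependent ℂ ![linePair (p 0) (p 1) (p 2) (p 3), linePair (p 0) (p 2) (p 1) (p 3)] := by
  set A := linePair (p 0) (p 1) (p 2) (p 3)
  set B := linePair (p 0) (p 2) (p 1) (p 3)
  refine LinearIndependent.pair_iff.mpr fun s t hst => ?_
  have hJ : jacDet A B (p 0) ≠ 0 :=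
    right_ne_zero_of_mul <| (cofactor_mul_jacDet_linePair p 0).trans_ne <|
      Finset.prod_ne_zero_iff.mpr fun j _ => hp.cofactor_ne_zero j
  have hs := jacDet_smul_add_smul A B s t 0 1 (p 0)
  have ht := jacDet_smul_add_smul A B 1 0 s t (p 0)
  simp only [hst, zero_smul, one_smul, zero_add, add_zero] at hs ht
  have hzero : jacDet 0 B (p 0) = 0 ∧ jacDet A 0 (p 0) = 0 := by simp [jacDet]
  rw [hzero.1, eq_comm] at hs
  rw [hzero.2, eq_comm] at ht
  simpa [hJ] using And.intro hs ht

theorem exists_eq_smul_linePair_add_smul_linePair {P : MvPolynomial (Fin 2) ℂ}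
    (hP : P.totalDegree ≤ 2) (hPz : ∀ i, eval (p i) P = 0) :
    ∃ α β : ℂ, P = α • linePair (p 0) (p 1) (p 2) (p 3) + β • linePair (p 0) (p 2) (p 1) (p 3) := by
  set W := restrictTotalDegree (Fin 2) ℂ 2
  let v : Fin 2 → W := ![⟨_, linePair_mem_restrictTotalDegree (p 0) (p 1) (p 2) (p 3)⟩,
    ⟨_, linePair_mem_restrictTotalDegree (p 0) (p 2) (p 1) (p 3)⟩]
  have hv : LinearIndependent ℂ v := by
    have : W.subtype ∘ v =
        ![linePair (p 0) (p 1) (p 2) (p 3), linePair (p 0) (p 2) (p 1) (p 3)] := by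
      ext j : 1; fin_cases j <;> rfl
    exact LinearIndependent.of_comp W.subtype (this ▸ hp.linearIndependent_linePair)
  have hspan : Submodule.span ℂ (Set.range v) = LinearMap.ker ((evalOn p).domRestrict W) := by
    refine Submodule.eq_of_le_of_finrank_le ?_ <| by
      simpa [finrank_span_eq_card hv] using hp.finrank_ker_evalOn_domRestrict_le
    refine Submodule.span_le.mpr (Set.range_subset_iff.mpr fun j => ?_)
    ext i
    fin_cases j <;> fin_cases i <;> simp [v, linePair]
  have hPW : (⟨P, (mem_restrictTotalDegree _ _ _).mpr hP⟩ : W) ∈ Submodule.span ℂ (Set.range v) :=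
    hspan ▸ funext hPz
  obtain ⟨c, hc⟩ := (Submodule.mem_span_range_iff_exists_fun ℂ).mp hPW
  exact ⟨c 0, c 1, by simpa [Fin.sum_univ_two, v] using congrArg Subtype.val hc.symm⟩

theorem sum_eval_div_jacDet_linePair_eq_zero (α β γ δ : ℂ) {g : MvPolynomial (Fin 2) ℂ}
    (hg : g.totalDegree ≤ 1) :
    ∑ i, eval (p i) g /
        jacDet (α • linePair (p 0) (p 1) (p 2) (p 3) + β • linePair (p 0) (p 2) (p 1) (p 3))
          (γ • linePair (p 0) (p 1) (p 2) (p 3) + δ • linePair (p 0) (p 2) (p 1) (p 3)) (p i) =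
      0 :=
  -- no case split on `α * δ - β * γ = 0`: then both sides of the first step are `0` (`x / 0 = 0`)
  calc _ = ∑ i, eval (p i) g * cofactor p i / ((α * δ - β * γ) * ∏ j, cofactor p j) :=
        Finset.sum_congr rfl fun i _ => by
          rw [jacDet_smul_add_smul, eq_div_of_mul_eq (hp.cofactor_ne_zero i)
            ((mul_comm _ _).trans (cofactor_mul_jacDet_linePair p i)), ← mul_div_assoc,
            div_div_eq_mul_div]
    _ = 0 := by rw [← Finset.sum_div, sum_eval_mul_cofactor hg, zero_div]

end NoThreeCollinear

theorem stmt_6_general (P Q : MvPolynomial (Fin 2) ℂ)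
    (hP : P.totalDegree ≤ 2) (hQ : Q.totalDegree ≤ 2)
    (p : Fin 4 → (Fin 2 → ℂ)) (hinj : Function.Injective p)
    (hPz : ∀ i, eval (p i) P = 0) (hQz : ∀ i, eval (p i) Q = 0)
    (hall : ∀ v : Fin 2 → ℂ, eval v P = 0 → eval v Q = 0 → ∃ i, v = p i) :
    (∑ i, jacTr P Q (p i) / jacDet P Q (p i) = 0) ∧
    (∑ i, 1 / jacDet P Q (p i) = 0) := by
  have hp : NoThreeCollinear p := noThreeCollinear_of_common_zeros hP hQ hinj hPz hQz hall
  have hdiv : (pderiv 0 P + pderiv 1 Q).totalDegree ≤ 1 :=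
    (totalDegree_add _ _).trans <| max_le
      ((totalDegree_pderiv_le 0 P).trans (by omega)) ((totalDegree_pderiv_le 1 Q).trans (by omega))
  obtain ⟨α, β, rfl⟩ := hp.exists_eq_smul_linePair_add_smul_linePair hP hPz
  obtain ⟨γ, δ, rfl⟩ := hp.exists_eq_smul_linePair_add_smul_linePair hQ hQz
  exact ⟨by simpa [jacTr] using hp.sum_eval_div_jacDet_linePair_eq_zero α β γ δ hdiv,
    by simpa using hp.sum_eval_div_jacDet_linePair_eq_zero α β γ δ (g := 1) (by simp)⟩

/-- For a quadratic vector field `H = P ∂/∂x + Q ∂/∂y` on `ℂ²` with exactly four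
nondegenerate singular points, `∑ tr DH(pᵢ)/det DH(pᵢ) = 0` and `∑ 1/det DH(pᵢ) = 0`. -/
theorem stmt_6 (P Q : MvPolynomial (Fin 2) ℂ)
    (hP : P.totalDegree ≤ 2) (hQ : Q.totalDegree ≤ 2)
    (p : Fin 4 → (Fin 2 → ℂ)) (hinj : Function.Injective p)
    (hPz : ∀ i, eval (p i) P = 0) (hQz : ∀ i, eval (p i) Q = 0)
    (hall : ∀ v : Fin 2 → ℂ, eval v P = 0 → eval v Q = 0 → ∃ i, v = p i)
    (hnd : ∀ i, jacDet P Q (p i) ≠ 0) :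
    (∑ i, jacTr P Q (p i) / jacDet P Q (p i) = 0) ∧
    (∑ i, 1 / jacDet P Q (p i) = 0) :=
  stmt_6_general P Q hP hQ p hinj hPz hQz hall
end

section
/- Define the elementary multisymmetric polynomials e_{i,j} in variables (z_1,w_1,z_2,w_2,z_3,w_3) by the identity prod_{k=1}^3 (1 + x z_k + y w_k) = sum_{i,j} e_{i,j} x^i y^j, and let Δ = 27 e_{3,0}^2 - e_{2,0}^2 e_{1,0}^2 + 4 e_{2,0}^3 + 4 e_{3,0} e_{1,0}^3 - 18 e_{3,0} e_{2,0} e_{1,0}. Then the polynomial identity Δ·e_{1,2} = -e_{3,0}e_{2,0}e_{1,1}e_{1,0}e_{0,1} - e_{2,1}e_{2,0}e_{1,1}e_{1,0}^2 - 3e_{3,0}e_{2,0}e_{1,1}^2 + 2e_{3,0}e_{2,1}e_{1,0}^2e_{0,1} - 3e_{3,0}e_{2,1}e_{1,1}e_{1,0} - 6e_{3,0}e_{2,1}e_{2,0}e_{0,1} + e_{3,0}e_{1,1}^2e_{1,0}^2 + e_{2,1}^2e_{1,0}^3 + 9e_{3,0}e_{2,1}^2 + 9e_{3,0}^2e_{1,1}e_{0,1}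 + 4e_{2,1}e_{2,0}^2e_{1,1} - 4e_{2,1}^2e_{2,0}e_{1,0} + e_{3,0}e_{2,0}^2e_{0,1}^2 - 3e_{3,0}^2e_{1,0}e_{0,1}^2 holds in the polynomial ring C[z_1,w_1,z_2,w_2,z_3,w_3]. -/
open MvPolynomial

/-- The indeterminates `z₁, z₂, z₃` in `ℂ[z₁,w₁,z₂,w₂,z₃,w₃]`. -/
noncomputable def zv : Fin 3 → MvPolynomial (Fin 6) ℂ := ![X 0, X 2, X 4]

/-- The indeterminates `w₁, w₂, w₃` in `ℂ[z₁,w₁,z₂,w₂,z₃,w₃]`. -/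
noncomputable def wv : Fin 3 → MvPolynomial (Fin 6) ℂ := ![X 1, X 3, X 5]

set_option maxHeartbeats 2000000 in
/-- Coefficient extraction for cubic-form bivariate polynomials. -/
lemma extract_coeffs {R : Type*} [CommRing R] (e00 e10 e01 e20 e11 e02 e30 e21 e12 e03
    f00 f10 f01 f20 f11 f02 f30 f21 f12 f03 : R)
    (h : (C e00 + C e10 * X 0 + C e01 * X 1 + C e20 * X 0 ^ 2 + C e11 * (X 0 * X 1) +
      C e02 * X 1 ^ 2 + C e30 * X 0 ^ 3 + C e21 * (X 0 ^ 2 * X 1) +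
      C e12 * (X 0 * X 1 ^ 2) + C e03 * X 1 ^ 3 : MvPolynomial (Fin 2) R) =
      C f00 + C f10 * X 0 + C f01 * X 1 + C f20 * X 0 ^ 2 + C f11 * (X 0 * X 1) +
      C f02 * X 1 ^ 2 + C f30 * X 0 ^ 3 + C f21 * (X 0 ^ 2 * X 1) +
      C f12 * (X 0 * X 1 ^ 2) + C f03 * X 1 ^ 3) :
    e10 = f10 ∧ e01 = f01 ∧ e20 = f20 ∧ e11 = f11 ∧ e30 = f30 ∧ e21 = f21 ∧ e12 = f12 := by
  have key : ∀ m : Fin 2 →₀ ℕ, coeff m _ = coeff m _ := fun m => congrArg (coeff m) h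
  refine ⟨?_, ?_, ?_, ?_, ?_, ?_, ?_⟩
  · have h2 := key (Finsupp.single 0 1)
    simp only [X, X_pow_eq_monomial, monomial_pow, monomial_mul, C_mul_monomial, coeff_monomial,
      coeff_C, mul_one, one_mul] at h2
    simpa [Finsupp.ext_iff, Fin.forall_fin_two, Finsupp.single_apply, Finsupp.add_apply] using h2
  · have h2 := key (Finsupp.single 1 1)
    simp only [X, X_pow_eq_monomial, monomial_pow, monomial_mul, C_mul_monomial, coeff_monomial,
      coeff_C, mul_one, one_mul] at h2
    simpa [Finsupp.ext_iff, Fin.forall_fin_two, Finsupp.single_apply, Finsupp.add_apply] using h2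
  · have h2 := key (Finsupp.single 0 2)
    simp only [X, X_pow_eq_monomial, monomial_pow, monomial_mul, C_mul_monomial, coeff_monomial,
      coeff_C, mul_one, one_mul] at h2
    simpa [Finsupp.ext_iff, Fin.forall_fin_two, Finsupp.single_apply, Finsupp.add_apply] using h2
  · have h2 := key (Finsupp.single 0 1 + Finsupp.single 1 1)
    simp only [X, X_pow_eq_monomial, monomial_pow, monomial_mul, C_mul_monomial, coeff_monomial,
      coeff_C, mul_one, one_mul] at h2
    simpa [Finsupp.ext_iff, Fin.forall_fin_two, Finsupp.single_apply, Finsupp.add_apply] using h2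
  · have h2 := key (Finsupp.single 0 3)
    simp only [X, X_pow_eq_monomial, monomial_pow, monomial_mul, C_mul_monomial, coeff_monomial,
      coeff_C, mul_one, one_mul] at h2
    simpa [Finsupp.ext_iff, Fin.forall_fin_two, Finsupp.single_apply, Finsupp.add_apply] using h2
  · have h2 := key (Finsupp.single 0 2 + Finsupp.single 1 1)
    simp only [X, X_pow_eq_monomial, monomial_pow, monomial_mul, C_mul_monomial, coeff_monomial,
      coeff_C, mul_one, one_mul] at h2
    simpa [Finsupp.ext_iff, Fin.forall_fin_two, Finsupp.single_apply, Finsupp.add_apply] using h2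
  · have h2 := key (Finsupp.single 0 1 + Finsupp.single 1 2)
    simp only [X, X_pow_eq_monomial, monomial_pow, monomial_mul, C_mul_monomial, coeff_monomial,
      coeff_C, mul_one, one_mul] at h2
    simpa [Finsupp.ext_iff, Fin.forall_fin_two, Finsupp.single_apply, Finsupp.add_apply] using h2

set_option maxHeartbeats 2000000 in
lemma prod_expand :
    (∏ k : Fin 3, (1 + C (zv k) * X 0 + C (wv k) * X 1) :
        MvPolynomial (Fin 2) (MvPolynomial (Fin 6) ℂ)) =
      C 1 + C (X 0 + X 2 + X 4) * X 0 + C (X 1 + X 3 + X 5) * X 1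
      + C (X 0 * X 2 + X 0 * X 4 + X 2 * X 4) * X 0 ^ 2
      + C (X 0 * X 3 + X 2 * X 1 + X 0 * X 5 + X 4 * X 1 + X 2 * X 5 + X 4 * X 3) * (X 0 * X 1)
      + C (X 1 * X 3 + X 1 * X 5 + X 3 * X 5) * X 1 ^ 2
      + C (X 0 * X 2 * X 4) * X 0 ^ 3
      + C (X 0 * X 2 * X 5 + X 0 * X 4 * X 3 + X 2 * X 4 * X 1) * (X 0 ^ 2 * X 1)
      + C (X 0 * X 3 * X 5 + X 2 * X 1 * X 5 + X 4 * X 1 * X 3) * (X 0 * X 1 ^ 2)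
      + C (X 1 * X 3 * X 5) * X 1 ^ 3 := by
  rw [Fin.prod_univ_three]
  simp only [zv, wv, Matrix.cons_val_zero, Matrix.cons_val_one, Matrix.head_cons,
    Matrix.cons_val_two, Matrix.tail_cons, map_add, map_mul, map_one]
  ring

set_option maxHeartbeats 2000000 in
/-- Mattuck-type identity: with the elementary multisymmetric polynomials `e_{i,j}`
defined by `∏ₖ (1 + x zₖ + y wₖ) = ∑ e_{i,j} xⁱ yʲ` and
`Δ = 27e₃₀² - e₂₀²e₁₀² + 4e₂₀³ + 4e₃₀e₁₀³ - 18e₃₀e₂₀e₁₀`, the identity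
`Δ·e₁₂ = …` holds in `ℂ[z₁,w₁,z₂,w₂,z₃,w₃]`. -/
theorem stmt_9 (e00 e10 e01 e20 e11 e02 e30 e21 e12 e03 : MvPolynomial (Fin 6) ℂ)
    (h : (∏ k : Fin 3, (1 + C (zv k) * X 0 + C (wv k) * X 1) :
        MvPolynomial (Fin 2) (MvPolynomial (Fin 6) ℂ)) =
      C e00 + C e10 * X 0 + C e01 * X 1 + C e20 * X 0 ^ 2 + C e11 * (X 0 * X 1) +
      C e02 * X 1 ^ 2 + C e30 * X 0 ^ 3 + C e21 * (X 0 ^ 2 * X 1) +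
      C e12 * (X 0 * X 1 ^ 2) + C e03 * X 1 ^ 3) :
    (27 * e30 ^ 2 - e20 ^ 2 * e10 ^ 2 + 4 * e20 ^ 3 + 4 * e30 * e10 ^ 3
        - 18 * e30 * e20 * e10) * e12 =
      -(e30 * e20 * e11 * e10 * e01) - e21 * e20 * e11 * e10 ^ 2 - 3 * (e30 * e20 * e11 ^ 2)
      + 2 * (e30 * e21 * e10 ^ 2 * e01) - 3 * (e30 * e21 * e11 * e10)
      - 6 * (e30 * e21 * e20 * e01) + e30 * e11 ^ 2 * e10 ^ 2 + e21 ^ 2 * e10 ^ 3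
      + 9 * (e30 * e21 ^ 2) + 9 * (e30 ^ 2 * e11 * e01) + 4 * (e21 * e20 ^ 2 * e11)
      - 4 * (e21 ^ 2 * e20 * e10) + e30 * e20 ^ 2 * e01 ^ 2
      - 3 * (e30 ^ 2 * e10 * e01 ^ 2) := by
  have h' := h.symm.trans prod_expand
  obtain ⟨h10, h01, h20, h11, h30, h21, h12⟩ := extract_coeffs _ _ _ _ _ _ _ _ _ _ _ _ _ _ _ _ _ _ _ _ h'
  rw [h10, h01, h20, h11, h30, h21, h12]
  ring
end

section
/- Define e_{i,j} as the coefficients of x^i y^j in prod_{k=1}^3 (1 + x z_k + y w_k), and Δ = 27 e_{3,0}^2 - e_{2,0}^2 e_{1,0}^2 + 4 e_{2,0}^3 + 4 e_{3,0} e_{1,0}^3 - 18 e_{3,0} e_{2,0} e_{1,0}. Then Δ·e_{0,3} = -e_{2,1}^2e_{1,1}e_{1,0} + e_{2,1}e_{2,0}e_{1,1}^2 + e_{2,1}e_{2,0}^2e_{0,1}^2 + e_{2,1}^2e_{1,0}^2e_{0,1} - 2e_{2,1}^2e_{2,0}e_{0,1} - e_{3,0}e_{2,0}e_{1,1}e_{0,1}^2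 + e_{3,0}e_{1,1}^2e_{1,0}e_{0,1} - e_{3,0}e_{1,1}^3 + e_{3,0}^2e_{0,1}^3 - e_{2,1}e_{2,0}e_{1,1}e_{1,0}e_{0,1} + e_{2,1}^3 - 2e_{3,0}e_{2,1}e_{1,0}e_{0,1}^2 + 3e_{3,0}e_{2,1}e_{1,1}e_{0,1} as polynomials in z_1, w_1, z_2, w_2, z_3, w_3 over C. -/
open MvPolynomial

set_option maxHeartbeats 4000000 in
/-- Mattuck-type identity: with the elementary multisymmetric polynomials `e_{i,j}`
defined by `∏ₖ (1 + x zₖ + y wₖ) = ∑ e_{i,j} xⁱ yʲ` and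
`Δ = 27e₃₀² - e₂₀²e₁₀² + 4e₂₀³ + 4e₃₀e₁₀³ - 18e₃₀e₂₀e₁₀`, the identity
`Δ·e₀₃ = …` holds in `ℂ[z₁,w₁,z₂,w₂,z₃,w₃]`. -/
theorem stmt_10 (e00 e10 e01 e20 e11 e02 e30 e21 e12 e03 : MvPolynomial (Fin 6) ℂ)
    (h : (∏ k : Fin 3, (1 + C (zv k) * X 0 + C (wv k) * X 1) :
        MvPolynomial (Fin 2) (MvPolynomial (Fin 6) ℂ)) =
      C e00 + C e10 * X 0 + C e01 * X 1 + C e20 * X 0 ^ 2 + C e11 * (X 0 * X 1) +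
      C e02 * X 1 ^ 2 + C e30 * X 0 ^ 3 + C e21 * (X 0 ^ 2 * X 1) +
      C e12 * (X 0 * X 1 ^ 2) + C e03 * X 1 ^ 3) :
    (27 * e30 ^ 2 - e20 ^ 2 * e10 ^ 2 + 4 * e20 ^ 3 + 4 * e30 * e10 ^ 3
        - 18 * e30 * e20 * e10) * e03 =
      -(e21 ^ 2 * e11 * e10) + e21 * e20 * e11 ^ 2 + e21 * e20 ^ 2 * e01 ^ 2
      + e21 ^ 2 * e10 ^ 2 * e01 - 2 * (e21 ^ 2 * e20 * e01)
      - e30 * e20 * e11 * e01 ^ 2 + e30 * e11 ^ 2 * e10 * e01 - e30 * e11 ^ 3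
      + e30 ^ 2 * e01 ^ 3 - e21 * e20 * e11 * e10 * e01 + e21 ^ 3
      - 2 * (e30 * e21 * e10 * e01 ^ 2) + 3 * (e30 * e21 * e11 * e01) := by
  set z1 : MvPolynomial (Fin 6) ℂ := X 0
  set w1 : MvPolynomial (Fin 6) ℂ := X 1
  set z2 : MvPolynomial (Fin 6) ℂ := X 2
  set w2 : MvPolynomial (Fin 6) ℂ := X 3
  set z3 : MvPolynomial (Fin 6) ℂ := X 4
  set w3 : MvPolynomial (Fin 6) ℂ := X 5
  have hexp : (∏ k : Fin 3, (1 + C (zv k) * X 0 + C (wv k) * X 1) :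
        MvPolynomial (Fin 2) (MvPolynomial (Fin 6) ℂ)) =
      C 1 + C (z1 + z2 + z3) * X 0 + C (w1 + w2 + w3) * X 1
      + C (z1*z2 + z1*z3 + z2*z3) * X 0 ^ 2
      + C (z1*w2 + z2*w1 + z1*w3 + z3*w1 + z2*w3 + z3*w2) * (X 0 * X 1)
      + C (w1*w2 + w1*w3 + w2*w3) * X 1 ^ 2
      + C (z1*z2*z3) * X 0 ^ 3
      + C (z1*z2*w3 + z1*z3*w2 + z2*z3*w1) * (X 0 ^ 2 * X 1)
      + C (z1*w2*w3 + z2*w1*w3 + z3*w1*w2) * (X 0 * X 1 ^ 2)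
      + C (w1*w2*w3) * X 1 ^ 3 := by
    simp only [Fin.prod_univ_three, zv, wv, Matrix.cons_val_zero, Matrix.cons_val_one,
      Matrix.head_cons, Matrix.cons_val_two, Matrix.tail_cons, map_add, map_mul, map_one]
    ring
  rw [hexp] at h
  have coeffs := fun m => congrArg (coeff m) h
  have h10 := coeffs (Finsupp.single 0 1)
  have h01 := coeffs (Finsupp.single 1 1)
  have h20 := coeffs (Finsupp.single 0 2)
  have h11 := coeffs (Finsupp.single 0 1 + Finsupp.single 1 1)
  have h30 := coeffs (Finsupp.single 0 3)
  have h21 := coeffs (Finsupp.single 0 2 + Finsupp.single 1 1)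
  have h03 := coeffs (Finsupp.single 1 3)
  simp only [coeff_add, coeff_C_mul, coeff_C, X_pow_eq_monomial, monomial_mul, monomial_pow,
    one_pow, X, mul_one, coeff_monomial, Finsupp.ext_iff, Fin.forall_fin_two,
    Finsupp.add_apply, Finsupp.single_apply] at h10 h01 h20 h11 h30 h21 h03
  norm_num at h10 h01 h20 h11 h30 h21 h03
  rw [← h10, ← h01, ← h20, ← h11, ← h30, ← h21, ← h03]
  ring
end

section
/- For the map f of P^2 given in homogeneous coordinates by [z_1 : z_2 : z_3] ↦ [z_1(z_1 + 4z_2 + 2z_3) : 2z_1 z_2 + 3z_2^2 : 4z_1 z_3 + 5z_2 z_3 - z_3^2], the points [1:0:0], [1:1:0], [1:0:1], [5:-3:4] are fixed points, and in the affine chart z_1 = 1 the traces and determinants of I - Df at these points are respectively (t, d) = (-4, 3), (-3/5, -4/25), (4/3, 1/3), (9, -60). -/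
/-- The case-study map `f` of `ℙ²` in the affine chart `[1 : x : y]`:
`(x, y) ↦ ((2x + 3x²)/(1 + 4x + 2y), (4y + 5xy - y²)/(1 + 4x + 2y))`. -/
noncomputable def caseF (v : ℂ × ℂ) : ℂ × ℂ :=
  ((2 * v.1 + 3 * v.1 ^ 2) / (1 + 4 * v.1 + 2 * v.2),
   (4 * v.2 + 5 * v.1 * v.2 - v.2 ^ 2) / (1 + 4 * v.1 + 2 * v.2))

/-- The matrix `I - Df(p)` of a self-map `F` of `ℂ²` at a point `p`. -/
noncomputable def IminusDf (F : ℂ × ℂ → ℂ × ℂ) (p : ℂ × ℂ) : Matrix (Fin 2) (Fin 2) ℂ :=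
  !![1 - (fderiv ℂ F p (1, 0)).1, -(fderiv ℂ F p (0, 1)).1;
     -(fderiv ℂ F p (1, 0)).2, 1 - (fderiv ℂ F p (0, 1)).2]

/-! At a fixed point `p` each coordinate `gᵢ / h` of `f` satisfies `gᵢ p = pᵢ * h p`, so the
quotient rule collapses to `Df(p) = h(p)⁻¹ (Dgᵢ - pᵢ Dh)ᵢ`, a matrix with polynomial entries in `p`.
The four traces and determinants are then plain arithmetic. -/

section QuotientRule

variable {𝕜 E : Type*} [NontriviallyNormedField 𝕜] [NormedAddCommGroup E] [NormedSpace 𝕜 E]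
  {g h : E → 𝕜} {G H : E →L[𝕜] 𝕜} {p : E} {c : 𝕜}

theorem HasFDerivAt.div_of_eq_mul (hg : HasFDerivAt g G p) (hh : HasFDerivAt h H p)
    (hp : h p ≠ 0) (hc : g p = c * h p) :
    HasFDerivAt (fun v => g v / h v) ((h p)⁻¹ • (G - c • H)) p := by
  simp only [div_eq_mul_inv]
  refine (hg.fun_mul ((hasDerivAt_inv hp).comp_hasFDerivAt p hh)).congr_fderiv ?_
  ext v
  simp only [hc, Function.comp_apply, add_apply, smul_apply, smul_eq_mul, neg_mul, mul_neg,
    sub_apply]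
  field_simp
  ring

end QuotientRule

theorem IminusDf_caseF_of_fixed {p : ℂ × ℂ} (hfix : caseF p = p)
    (hp : 1 + 4 * p.1 + 2 * p.2 ≠ 0) :
    IminusDf caseF p = 1 - (1 + 4 * p.1 + 2 * p.2)⁻¹ •
      !![2 + 2 * p.1, -2 * p.1; p.2, 4 + 5 * p.1 - 4 * p.2] := by
  obtain ⟨hfix₁, hfix₂⟩ := Prod.ext_iff.1 hfix
  rw [caseF, div_eq_iff hp] at hfix₁ hfix₂
  have hx : HasFDerivAt (fun v : ℂ × ℂ => v.1) (ContinuousLinearMap.fst ℂ ℂ ℂ) p := hasFDerivAt_fst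
  have hy : HasFDerivAt (fun v : ℂ × ℂ => v.2) (ContinuousLinearMap.snd ℂ ℂ ℂ) p := hasFDerivAt_snd
  have hden : HasFDerivAt (fun v : ℂ × ℂ => 1 + 4 * v.1 + 2 * v.2) _ p :=
    ((hasFDerivAt_const 1 p).add (hx.const_mul 4)).add (hy.const_mul 2)
  have hnum₁ : HasFDerivAt (fun v : ℂ × ℂ => 2 * v.1 + 3 * v.1 ^ 2) _ p :=
    (hx.const_mul 2).add ((hx.pow 2).const_mul 3)
  have hnum₂ : HasFDerivAt (fun v : ℂ × ℂ => 4 * v.2 + 5 * v.1 * v.2 - v.2 ^ 2) _ p :=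
    ((hy.const_mul 4).add ((hx.const_mul 5).mul hy)).sub (hy.pow 2)
  have hF : HasFDerivAt caseF _ p :=
    (hnum₁.div_of_eq_mul hden hp hfix₁).prodMk (hnum₂.div_of_eq_mul hden hp hfix₂)
  rw [IminusDf, hF.fderiv]
  ext i j
  fin_cases i <;> fin_cases j <;>
    simp only [ContinuousLinearMap.prod_apply, smul_apply, sub_apply, add_apply, zero_apply,
      ContinuousLinearMap.coe_fst', ContinuousLinearMap.coe_snd', smul_eq_mul, nsmul_eq_mul,
      Fin.zero_eta, Fin.mk_one, Fin.isValue, Matrix.of_apply, Matrix.cons_val', Matrix.cons_val_zero,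
      Matrix.cons_val_one, Matrix.cons_val_fin_one, Matrix.smul_apply, Matrix.sub_apply,
      Matrix.one_apply_eq, Matrix.one_apply_ne, ne_eq, zero_ne_one, one_ne_zero, not_false_eq_true] <;>
    ring

/-- For the case-study map, the four points `(0,0), (1,0), (0,1), (-3/5, 4/5)`
(the affine images of `[1:0:0], [1:1:0], [1:0:1], [5:-3:4]`) are fixed, and the traces
and determinants of `I - Df` there are `(-4,3), (-3/5,-4/25), (4/3,1/3), (9,-60)`. -/
theorem stmt_12 :
    (caseF (0, 0) = (0, 0) ∧
      (IminusDf caseF (0, 0)).trace = -4 ∧ (IminusDf caseF (0, 0)).det = 3) ∧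
    (caseF (1, 0) = (1, 0) ∧
      (IminusDf caseF (1, 0)).trace = -3 / 5 ∧ (IminusDf caseF (1, 0)).det = -4 / 25) ∧
    (caseF (0, 1) = (0, 1) ∧
      (IminusDf caseF (0, 1)).trace = 4 / 3 ∧ (IminusDf caseF (0, 1)).det = 1 / 3) ∧
    (caseF (-3 / 5, 4 / 5) = (-3 / 5, 4 / 5) ∧
      (IminusDf caseF (-3 / 5, 4 / 5)).trace = 9 ∧
      (IminusDf caseF (-3 / 5, 4 / 5)).det = -60) := by
  -- `norm_num` discharges the side conditions (fixed point, `h p ≠ 0`) of the conditional rewrite.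
  norm_num [caseF, IminusDf_caseF_of_fixed, Matrix.trace_fin_two, Matrix.det_fin_two]
end
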